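/- arXiv:2202.10568 — 2 statements merged into one kernel-verified Lean document; each statement's English description precedes it below -/
import Mathlib

section
/- Every weakly equicontinuous semi-decomposition on a metric space is of characteristic 0, i.e. closure(F(x)) = D(x) for every point x. -/
/-!
A constant net at `x` shows `closure (F x) ⊆ D(x)`. Conversely, if `y_α ∈ F(x_α)` with
`x_α → x` and `y_α → y`, then the distance from `y_α` to `F x` is at most
`d_H(F(x_α), F(x))`, which tends to `0` by weak equicontinuity; by continuity of the
distance to a set, `y` is at distance `0` from `F x`.
-/

open Filter Topology

universe u

/-- The bilateral prolongation `D(x)`. -/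
def Prolong {X : Type u} [TopologicalSpace X] (F : X → Set X) (x : X) : Set X :=
  { y | ∃ (ι : Type u) (l : Filter ι) (xa ya : ι → X), l.NeBot ∧
      (∀ a, ya a ∈ F (xa a)) ∧ Tendsto xa l (nhds x) ∧ Tendsto ya l (nhds y) }

/-- Weak equicontinuity of a semi-decomposition on a metric space: for every `ε > 0`
there is `δ > 0` such that `d_H(F x, F y) < ε` whenever `dist x y < δ`. -/
def WeaklyEquicontinuous {X : Type u} [MetricSpace X] (F : X → Set X) : Prop :=
  ∀ ε : ℝ, 0 < ε → ∃ δ : ℝ, 0 < δ ∧ ∀ x y : X, dist x y < δ →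
    EMetric.hausdorffEdist (F x) (F y) < ENNReal.ofReal ε

open Metric

theorem closure_subset_prolong {X : Type u} [TopologicalSpace X] (F : X → Set X) (x : X) :
    closure (F x) ⊆ Prolong F x := by
  intro y hy
  refine ⟨F x, comap (↑) (𝓝 y), fun _ => x, (↑), ?_, fun a => a.2, tendsto_const_nhds,
    tendsto_comap⟩
  exact mem_closure_iff_comap_neBot.1 hy

theorem prolong_subset_closure {X : Type u} [PseudoEMetricSpace X] {F : X → Set X} {x : X}
    (hF : Tendsto (fun x' => hausdorffEDist (F x') (F x)) (𝓝 x) (𝓝 0)) :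
    Prolong F x ⊆ closure (F x) := by
  rintro y ⟨ι, l, xa, ya, hl, hya_mem, hxa, hya⟩
  rw [mem_closure_iff_infEDist_zero]
  have h_zero : Tendsto (fun a => infEDist (ya a) (F x)) l (𝓝 0) :=
    tendsto_of_tendsto_of_tendsto_of_le_of_le tendsto_const_nhds (hF.comp hxa)
      (fun _ => zero_le) (fun a => infEDist_le_hausdorffEDist_of_mem (hya_mem a))
  have h_lim : Tendsto (fun a => infEDist (ya a) (F x)) l (𝓝 (infEDist y (F x))) :=
    (continuous_infEDist.tendsto y).comp hya
  exact tendsto_nhds_unique h_lim h_zero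

theorem WeaklyEquicontinuous.tendsto_hausdorffEDist {X : Type u} [MetricSpace X]
    {F : X → Set X} (hF : WeaklyEquicontinuous F) (x : X) :
    Tendsto (fun x' => hausdorffEDist (F x') (F x)) (𝓝 x) (𝓝 0) := by
  refine ENNReal.tendsto_nhds_zero.2 fun ε hε => ?_
  obtain ⟨r, -, hr_pos, hr_lt⟩ := ENNReal.lt_iff_exists_real_btwn.1 hε
  obtain ⟨δ, hδ, hFδ⟩ := hF r (ENNReal.ofReal_pos.1 hr_pos)
  filter_upwards [ball_mem_nhds x hδ] with x' hx'
  exact ((hFδ x' x hx').trans hr_lt).le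

theorem weaklyEquicontinuous_char_zero_general {X : Type u} [MetricSpace X] (F : X → Set X)
    (hwe : WeaklyEquicontinuous F) :
    ∀ x, closure (F x) = Prolong F x := fun x =>
  (closure_subset_prolong F x).antisymm (prolong_subset_closure (hwe.tendsto_hausdorffEDist x))

/-- every weakly equicontinuous semi-decomposition on a metric space
is of characteristic `0`. -/
theorem weaklyEquicontinuous_char_zero {X : Type u} [MetricSpace X] (F : X → Set X)
    (hmem : ∀ x, x ∈ F x) (hsub : ∀ x y, x ∈ F y → F x ⊆ F y)
    (hwe : WeaklyEquicontinuous F) :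
    ∀ x, closure (F x) = Prolong F x :=
  weaklyEquicontinuous_char_zero_general F hwe
end

section
/- Every weakly almost periodic semi-decomposition on a normal Hausdorff (T4) space is R-closed: the element closure relation { (x,y) : y ∈ closure(F(x)) } is closed in X × X. -/
universe u

/-!
Pointwise almost periodicity makes the relation `y ∈ closure (F x)` symmetric, so weak almost
periodicity says exactly that `x ↦ closure (F x)` is upper semicontinuous: the points whose
orbit closure lies in an open `U` form the complement of `⋃ z ∉ U, closure (F z)`. An upper
semicontinuous closed-valued map into a regular space has a closed graph.
-/

open Set Filter Topology

theorem isClosed_setOf_mem_of_isOpen_setOf_subset {X Y : Type*} [TopologicalSpace X]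
    [TopologicalSpace Y] [RegularSpace Y] {C : X → Set Y} (hC : ∀ x, IsClosed (C x))
    (husc : ∀ U, IsOpen U → IsOpen {x | C x ⊆ U}) :
    IsClosed {p : X × Y | p.2 ∈ C p.1} := by
  refine isOpen_compl_iff.mp <| isOpen_iff_mem_nhds.mpr ?_
  rintro ⟨x, y⟩ (hy : y ∉ C x)
  have hsep : Disjoint (𝓝ˢ (C x)) (𝓝 y) :=
    disjoint_nhdsSet_nhds.mpr ((hC x).closure_eq.symm ▸ hy)
  obtain ⟨U, hU, V, hV, hUV⟩ := Filter.disjoint_iff.mp hsep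
  have hxU : x ∈ {x' | C x' ⊆ interior U} := subset_interior_iff_mem_nhdsSet.mpr hU
  filter_upwards [prod_mem_nhds ((husc _ isOpen_interior).mem_nhds hxU) hV]
  rintro ⟨x', y'⟩ ⟨hx', hy'⟩ hy'C
  exact hUV.le_bot ⟨interior_subset (hx' hy'C), hy'⟩

section ElementClosure

variable {X : Type*} [TopologicalSpace X] {F : X → Set X}

theorem mem_closure_comm (hmem : ∀ x, x ∈ F x)
    (hpap : ∀ x y, y ∈ closure (F x) → closure (F y) = closure (F x)) {x y : X} :
    y ∈ closure (F x) ↔ x ∈ closure (F y) := by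
  have key : ∀ x y, y ∈ closure (F x) → x ∈ closure (F y) := fun x y h ↦
    hpap x y h ▸ subset_closure (hmem x)
  exact ⟨key x y, key y x⟩

theorem isOpen_setOf_closure_subset (hmem : ∀ x, x ∈ F x)
    (hpap : ∀ x y, y ∈ closure (F x) → closure (F y) = closure (F x))
    (hwap : ∀ A : Set X, IsClosed A → IsClosed (⋃ x ∈ A, closure (F x)))
    {U : Set X} (hU : IsOpen U) :
    IsOpen {x | closure (F x) ⊆ U} := by
  have : {x | closure (F x) ⊆ U} = (⋃ z ∈ Uᶜ, closure (F z))ᶜ := by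
    ext x
    simp only [mem_ofPred_eq, mem_compl_iff, mem_iUnion, exists_prop, not_exists, not_and,
      ← mem_closure_comm hmem hpap]
    exact ⟨fun h z hz hxz ↦ hz (h hxz), fun h z hz ↦ by_contra fun hzU ↦ h z hzU hz⟩
  rw [this, isOpen_compl_iff]
  exact hwap _ hU.isClosed_compl

end ElementClosure

theorem wap_R_closed_general {X : Type u} [TopologicalSpace X] [T4Space X] (F : X → Set X)
    (hmem : ∀ x, x ∈ F x)
    (hpap : ∀ x y, y ∈ closure (F x) → closure (F y) = closure (F x))
    (hwap : ∀ A : Set X, IsClosed A → IsClosed (⋃ x ∈ A, closure (F x))) :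
    IsClosed {p : X × X | p.2 ∈ closure (F p.1)} :=
  isClosed_setOf_mem_of_isOpen_setOf_subset (fun _ ↦ isClosed_closure)
    fun _ hU ↦ isOpen_setOf_closure_subset hmem hpap hwap hU

/-- every weakly almost periodic semi-decomposition on a T4 space is
`R`-closed: the element closure relation `{(x,y) | y ∈ closure (F x)}` is closed. -/
theorem wap_R_closed {X : Type u} [TopologicalSpace X] [T4Space X] (F : X → Set X)
    (hmem : ∀ x, x ∈ F x) (hsub : ∀ x y, x ∈ F y → F x ⊆ F y)
    (hpap : ∀ x y, y ∈ closure (F x) → closure (F y) = closure (F x))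
    (hwap : ∀ A : Set X, IsClosed A → IsClosed (⋃ x ∈ A, closure (F x))) :
    IsClosed {p : X × X | p.2 ∈ closure (F p.1)} :=
  wap_R_closed_general F hmem hpap hwap
end
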